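/- arXiv:2009.06856 — 6 statements merged into one kernel-verified Lean document; each statement's English description precedes it below -/
import Mathlib

section
/- Knapsack Voting is strategy-proof under the overlap utility model: for any voter v with truthful consistent vote S_v ⊆ P' with |S_v| = B, any profile of other votes, and any alternative consistent vote T_v with |T_v| = B, the overlap utility |S_v ∩ W(S_v)| of the Knapsack outcome when v votes truthfully is at least the overlap utility |S_v ∩ W(T_v)| of the outcome when v votes T_v, where W(·) denotes the winning set of size B chosen by descending score with a fixed consistent deterministic tie-breaking order. -/
/-- A set of per-dollar subprojects is consistent: if it contains the `t`-th
dollar of a project it contains every earlier dollar of that project. -/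
def KConsistent {P : Type*} {c : P → ℕ} (S : Finset (Σ p : P, Fin (c p))) : Prop :=
  ∀ (p : P) (t t' : Fin (c p)), t' ≤ t → (⟨p, t⟩ : Σ p : P, Fin (c p)) ∈ S →
    (⟨p, t'⟩ : Σ p : P, Fin (c p)) ∈ S

/-- `W` is the Knapsack winning set of size `B` for score function `s`,
with ties broken by the strict order `prec` (smaller wins). -/
def IsWinningSet {P' : Type*} [Fintype P'] (B : ℕ) (prec : P' → P' → Prop)
    (s : P' → ℕ) (W : Finset P') : Prop :=
  W.card = B ∧ ∀ j ∈ W, ∀ k ∉ W, s k < s j ∨ (s k = s j ∧ prec j k)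

/-- Knapsack Voting is strategy-proof under the overlap utility model:
voting truthfully yields at least as much overlap utility as any
alternative consistent budget-sized vote. -/
theorem stmt_2 {P : Type*} [Fintype P] [DecidableEq P] (c : P → ℕ) (B : ℕ)
    (prec : (Σ p : P, Fin (c p)) → (Σ p : P, Fin (c p)) → Prop)
    -- `prec` is a strict total order ...
    (prec_trans : Transitive prec)
    (prec_irrefl : Irreflexive prec)
    (prec_total : ∀ j k, j ≠ k → prec j k ∨ prec k j)
    -- ... that is consistent with the per-dollar structure
    (prec_consistent : ∀ (p : P) (t t' : Fin (c p)), t' < t →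
      prec ⟨p, t'⟩ ⟨p, t⟩)
    -- the other voters and their (arbitrary valid) votes
    {Voter : Type*} [Fintype Voter]
    (others : Voter → Finset (Σ p : P, Fin (c p)))
    (hothers : ∀ u, KConsistent (others u) ∧ (others u).card = B)
    -- voter v's true preference and an alternative vote
    (Sv Tv : Finset (Σ p : P, Fin (c p)))
    (hSv : KConsistent Sv) (hSvcard : Sv.card = B)
    (hTv : KConsistent Tv) (hTvcard : Tv.card = B)
    -- scores when v casts vote X
    (score : Finset (Σ p : P, Fin (c p)) → (Σ p : P, Fin (c p)) → ℕ)
    (hscore : ∀ X j, score X j =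
      (Finset.univ.filter fun u => j ∈ others u).card + (if j ∈ X then 1 else 0))
    -- the respective winning sets
    (WS WT : Finset (Σ p : P, Fin (c p)))
    (hWS : IsWinningSet B prec (score Sv) WS)
    (hWT : IsWinningSet B prec (score Tv) WT) :
    (Sv ∩ WT).card ≤ (Sv ∩ WS).card := by
  classical
  by_contra hcon
  push_neg at hcon
  obtain ⟨hWScard, hWSopt⟩ := hWS
  obtain ⟨hWTcard, hWTopt⟩ := hWT
  -- find j ∈ Sv ∩ WT with j ∉ WS
  have hjex : ¬ (Sv ∩ WT ⊆ WS) := by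
    intro hsub
    have hs : Sv ∩ WT ⊆ Sv ∩ WS := fun x hx =>
      Finset.mem_inter.2 ⟨(Finset.mem_inter.1 hx).1, hsub hx⟩
    have := Finset.card_le_card hs
    omega
  obtain ⟨j, hjmem, hjWS⟩ := Finset.not_subset.1 hjex
  have hjSv := (Finset.mem_inter.1 hjmem).1
  have hjWT := (Finset.mem_inter.1 hjmem).2
  -- find k ∈ WS \ Sv with k ∉ WT
  have hkex : ¬ (WS \ Sv ⊆ WT) := by
    intro hsub
    have h1 : (WS ∩ Sv).card + (WS \ Sv).card = WS.card :=
      Finset.card_inter_add_card_sdiff _ _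
    have h2 : (WT ∩ Sv).card + (WT \ Sv).card = WT.card :=
      Finset.card_inter_add_card_sdiff _ _
    have h3 : WS \ Sv ⊆ WT \ Sv := fun x hx =>
      Finset.mem_sdiff.2 ⟨hsub hx, (Finset.mem_sdiff.1 hx).2⟩
    have h4 := Finset.card_le_card h3
    rw [Finset.inter_comm] at h1 h2
    omega
  obtain ⟨k, hkmem, hkWT⟩ := Finset.not_subset.1 hkex
  obtain ⟨hkWS, hkSv⟩ := Finset.mem_sdiff.1 hkmem
  have HS := hWSopt k hkWS j hjWS
  have HT := hWTopt j hjWT k hkWT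
  rw [hscore Sv j, hscore Sv k, if_pos hjSv, if_neg hkSv] at HS
  rw [hscore Tv j, hscore Tv k] at HT
  set bj := (Finset.univ.filter fun u => j ∈ others u).card with hbj
  set bk := (Finset.univ.filter fun u => k ∈ others u).card with hbk
  set tj := (if j ∈ Tv then 1 else 0) with htj
  set tk := (if k ∈ Tv then 1 else 0) with htk
  have htj1 : tj ≤ 1 := by rw [htj]; split <;> omega
  have htk1 : tk ≤ 1 := by rw [htk]; split <;> omega
  rcases HS with hlt | ⟨heq, hpkj⟩
  · rcases HT with hlt' | ⟨heq', _⟩ <;> omega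
  · rcases HT with hlt' | ⟨heq', hpjk⟩
    · omega
    · exact prec_irrefl j (prec_trans hpjk hpkj)
end

section
/- Single-swap monotonicity of the Knapsack outcome: Fix scores score : P' → ℕ arising from a vote profile, and let S be the size-B winning set under a fixed total tie-breaking order ≺. Suppose one voter changes her vote by removing subproject j and adding subproject k (j ≠ k), so the new scores are score'(j) = score(j) − 1, score'(k) = score(k) + 1, and score'(l) = score(l) otherwise, with new winning set S'. Then |S' \ S| ≤ 1, and if S ≠ S' then j ∈ S \ S' or k ∈ S' \ S. -/
/-- `W` is the size-`B` winning set for score `s` with ties broken by the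
linear order on `P'` (smaller wins ties). -/
def IsWinningSetZ {P' : Type*} [Fintype P'] [LinearOrder P'] (B : ℕ)
    (s : P' → ℤ) (W : Finset P') : Prop :=
  W.card = B ∧ ∀ j ∈ W, ∀ k ∉ W, s k < s j ∨ (s k = s j ∧ j < k)

/-- Single-swap monotonicity of the Knapsack outcome: decreasing the score of
`j` by one and increasing the score of `k` by one changes the winning set by at
most one element, and any change involves `j` leaving or `k` entering. -/
theorem stmt_3 {P' : Type*} [Fintype P'] [DecidableEq P'] [LinearOrder P']
    (B : ℕ) (score score' : P' → ℤ) (j k : P') (hjk : j ≠ k)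
    (hj : score' j = score j - 1) (hk : score' k = score k + 1)
    (hother : ∀ l, l ≠ j → l ≠ k → score' l = score l)
    (S S' : Finset P')
    (hS : IsWinningSetZ B score S) (hS' : IsWinningSetZ B score' S') :
    (S' \ S).card ≤ 1 ∧ (S ≠ S' → j ∈ S \ S' ∨ k ∈ S' \ S) := by
  obtain ⟨hcS, hwS⟩ := hS
  obtain ⟨hcS', hwS'⟩ := hS'
  have key : ∀ l ∈ S' \ S, ∀ m ∈ S \ S', l = k ∨ m = j := by
    intro l hl m hm
    simp only [Finset.mem_sdiff] at hl hm
    by_contra h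
    push_neg at h
    obtain ⟨hlk, hmj⟩ := h
    have h1 := hwS m hm.1 l hl.2
    have h2 := hwS' l hl.1 m hm.2
    have hl' : score' l ≤ score l := by
      rcases eq_or_ne l j with rfl | hlj
      · rw [hj]; omega
      · rw [hother l hlj hlk]
    have hm' : score m ≤ score' m := by
      rcases eq_or_ne m k with rfl | hmk
      · rw [hk]; omega
      · rw [hother m hmj hmk]
    rcases h1 with h1 | ⟨h1, h1'⟩ <;> rcases h2 with h2 | ⟨h2, h2'⟩ <;>
      first
      | omega
      | exact lt_asymm h1' h2'
  have hcard : (S \ S').card = (S' \ S).card :=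
    Finset.card_sdiff_comm (hcS.trans hcS'.symm)
  constructor
  · by_contra h
    push_neg at h
    obtain ⟨a, ha, b, hb, hab⟩ := Finset.one_lt_card.mp h
    have hex : ∃ l ∈ S' \ S, l ≠ k := by
      rcases eq_or_ne a k with rfl | hak
      · exact ⟨b, hb, fun hbk => hab hbk.symm⟩
      · exact ⟨a, ha, hak⟩
    obtain ⟨l, hl, hlk⟩ := hex
    have hsub : S \ S' ⊆ {j} := by
      intro m hm
      rcases key l hl m hm with h' | h'
      · exact absurd h' hlk
      · simp [h']
    have hle := Finset.card_le_card hsub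
    simp only [Finset.card_singleton] at hle
    omega
  · intro hne
    have h1 : (S' \ S).Nonempty := by
      rw [Finset.nonempty_iff_ne_empty]
      intro h
      exact hne ((Finset.eq_of_subset_of_card_le
        (Finset.sdiff_eq_empty_iff_subset.mp h) (hcS.trans hcS'.symm).le)).symm
    have h2 : (S \ S').Nonempty := by
      rw [← Finset.card_pos, hcard, Finset.card_pos]
      exact h1
    obtain ⟨l, hl⟩ := h1
    obtain ⟨m, hm⟩ := h2
    rcases key l hl m hm with h' | h'
    · exact Or.inr (h' ▸ hl)
    · exact Or.inl (h' ▸ hm)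
end

section
/- Under truthful voting, the Knapsack Voting outcome maximizes utilitarian social welfare under overlap utilities: for votes S_v ⊆ P' with |S_v| = B for each voter v, the set S* of size B maximizing Σ_{j ∈ S} score(j) over all size-B sets S also maximizes Σ_{v ∈ V} |S_v ∩ S| over all size-B sets S; moreover Σ_{j ∈ S} score(j) = Σ_{v ∈ V} |S_v ∩ S| for every size-B set S. -/
/-- Under truthful voting, the score-maximizing size-`B` set maximizes
utilitarian social welfare under overlap utilities, and the score of any
size-`B` set equals the total overlap utility it provides. -/
theorem stmt_4 {V P' : Type*} [Fintype V] [Fintype P'] [DecidableEq P']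
    (B : ℕ) (Svote : V → Finset P') (hcard : ∀ v, (Svote v).card = B)
    (score : P' → ℕ)
    (hscore : ∀ j, score j = (Finset.univ.filter fun v => j ∈ Svote v).card)
    (Sstar : Finset P') (hSstar : Sstar.card = B)
    (hmax : ∀ S : Finset P', S.card = B →
      ∑ j ∈ S, score j ≤ ∑ j ∈ Sstar, score j) :
    (∀ S : Finset P', S.card = B →
        ∑ j ∈ S, score j = ∑ v : V, (Svote v ∩ S).card) ∧
    (∀ S : Finset P', S.card = B →
        ∑ v : V, (Svote v ∩ S).card ≤ ∑ v : V, (Svote v ∩ Sstar).card) := by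
  have key : ∀ S : Finset P', ∑ j ∈ S, score j = ∑ v : V, (Svote v ∩ S).card := by
    intro S
    simp only [hscore, Finset.filter_mem_eq_inter, Finset.card_eq_sum_ones]
    rw [Finset.sum_comm' (t' := Finset.univ) (s' := fun v => Svote v ∩ S)]
    · simp [Finset.inter_comm]
  refine ⟨fun S _ => key S, fun S hS => ?_⟩
  rw [← key S, ← key Sstar]
  exact hmax S hS
end

section
/- The Knapsack voting rule is the maximum likelihood estimator under the Noisy Knapsack Vote Model: for any profile of votes (S_i)_{i∈V} with each |S_i| ≤ B, a size-B set S* maximizes the likelihood Π_{i∈V} Pr(S_i | S*) ∝ Π_i exp(|S* ∩ S_i|) over all size-B subsets S ⊆ P' if and only if S* maximizes Σ_{j∈S*} score(j), where score(j) = #{i : j ∈ S_i}. -/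
lemma double_count {V P' : Type*} [Fintype V] [Fintype P'] [DecidableEq P']
    (Svote : V → Finset P') (score : P' → ℕ)
    (hscore : ∀ j, score j = (Finset.univ.filter fun i => j ∈ Svote i).card)
    (S : Finset P') :
    ∑ i : V, ((S ∩ Svote i).card) = ∑ j ∈ S, score j := by
  have : ∀ i : V, (S ∩ Svote i).card = ∑ j ∈ S, if j ∈ Svote i then 1 else 0 := by
    intro i
    rw [show S ∩ Svote i = S.filter (fun j => j ∈ Svote i) from by ext; simp,
      Finset.card_filter]
  simp_rw [this]
  rw [Finset.sum_comm]
  refine Finset.sum_congr rfl fun j _ => ?_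
  rw [hscore j, Finset.card_filter]

/-- The Knapsack rule is the MLE under the Noisy Knapsack Vote Model: a size-`B`
set maximizes the likelihood `∏ i, exp |S ∩ S_i|` over size-`B` sets iff it
maximizes the total score of its elements. -/
theorem stmt_7 {V P' : Type*} [Fintype V] [Fintype P'] [DecidableEq P']
    (B : ℕ) (Svote : V → Finset P') (hvotes : ∀ i, (Svote i).card ≤ B)
    (score : P' → ℕ)
    (hscore : ∀ j, score j = (Finset.univ.filter fun i => j ∈ Svote i).card)
    (Sstar : Finset P') (hSstar : Sstar.card = B) :
    (∀ S : Finset P', S.card = B →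
        ∏ i : V, Real.exp ((S ∩ Svote i).card) ≤
          ∏ i : V, Real.exp ((Sstar ∩ Svote i).card)) ↔
    (∀ S : Finset P', S.card = B →
        ∑ j ∈ S, score j ≤ ∑ j ∈ Sstar, score j) := by
  have key : ∀ S : Finset P',
      ∏ i : V, Real.exp ((S ∩ Svote i).card) =
        Real.exp ((∑ j ∈ S, score j : ℕ)) := by
    intro S
    rw [← Real.exp_sum, ← double_count Svote score hscore S]
    push_cast
    rfl
  constructor
  · intro h S hS
    have := h S hS
    rw [key S, key Sstar, Real.exp_le_exp] at this
    exact_mod_cast this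
  · intro h S hS
    rw [key S, key Sstar, Real.exp_le_exp]
    exact_mod_cast h S hS
end

section
/- Consistency is preserved by Knapsack aggregation: if every vote S_u ⊆ P' is consistent and the tie-breaking order ≺ is consistent (D^p_{t'} ≺ D^p_t for t' < t), then the size-B winning set (top B by score, ties broken by ≺) is consistent, i.e., if D^p_t is in the winning set then so is D^p_{t'} for every t' < t. -/
/-- Consistency is preserved by Knapsack aggregation: if all votes are
consistent and the tie-breaking order is consistent, then the size-`B`
winning set is consistent. -/
theorem stmt_14 {P : Type*} [Fintype P] [DecidableEq P] (c : P → ℕ) (B : ℕ)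
    {V : Type*} [Fintype V]
    (Svote : V → Finset (Σ p : P, Fin (c p)))
    (hvotes : ∀ u, KConsistent (Svote u))
    (score : (Σ p : P, Fin (c p)) → ℕ)
    (hscore : ∀ j, score j = (Finset.univ.filter fun u => j ∈ Svote u).card)
    -- a consistent tie-breaking order, given by an injective rank (lower wins)
    (rank : (Σ p : P, Fin (c p)) → ℕ) (hrank_inj : Function.Injective rank)
    (hrank_cons : ∀ (p : P) (t t' : Fin (c p)), t' < t →
      rank (⟨p, t'⟩ : Σ p : P, Fin (c p)) < rank ⟨p, t⟩)
    -- the winning set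
    (W : Finset (Σ p : P, Fin (c p)))
    (hW : W.card = B ∧ ∀ j ∈ W, ∀ k ∉ W,
      score k < score j ∨ (score k = score j ∧ rank j < rank k)) :
    KConsistent W := by
  intro p t t' hle htW
  rcases eq_or_lt_of_le hle with heq | hlt
  · subst heq; exact htW
  by_contra hnot
  have hscore_le : score (⟨p, t⟩ : Σ p : P, Fin (c p)) ≤ score ⟨p, t'⟩ := by
    rw [hscore, hscore]
    apply Finset.card_le_card
    intro u hu
    simp only [Finset.mem_filter, Finset.mem_univ, true_and] at hu ⊢
    exact hvotes u p t t' hle hu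
  rcases hW.2 ⟨p, t⟩ htW ⟨p, t'⟩ hnot with h | ⟨_, h⟩
  · omega
  · exact absurd (hrank_cons p t t' hlt) (by omega)
end

section
/- Existence of a swap partner in consistent equal-size sets: if S, T ⊆ P' are consistent sets with |S| = |T| and j ∈ T \ S is a 'top' element of T (i.e., j = D^p_t and D^p_{t''} ∉ T for all t'' > t), then there exists k ∈ S \ T such that k = D^q_z with D^q_{z'} ∈ T for all z' < z, and T ∪ {k} \ {j} is again a consistent set of the same size. -/
/-- Existence of a swap partner in consistent equal-size sets: if `j = D^p_t`
is a top element of `T` lying in `T \ S`, there is `k = D^q_z ∈ S \ T` all of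
whose predecessors lie in `T`, and `T ∪ {k} \ {j}` is consistent of the same
size. -/
theorem stmt_16 {P : Type*} [Fintype P] [DecidableEq P] (c : P → ℕ)
    (S T : Finset (Σ p : P, Fin (c p)))
    (hS : KConsistent S) (hT : KConsistent T) (hcard : S.card = T.card)
    (p : P) (t : Fin (c p))
    (hj : (⟨p, t⟩ : Σ p : P, Fin (c p)) ∈ T \ S)
    (htop : ∀ t'' : Fin (c p), t < t'' → (⟨p, t''⟩ : Σ p : P, Fin (c p)) ∉ T) :
    ∃ (q : P) (z : Fin (c q)),
      (⟨q, z⟩ : Σ p : P, Fin (c p)) ∈ S \ T ∧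
      (∀ z' : Fin (c q), z' < z → (⟨q, z'⟩ : Σ p : P, Fin (c p)) ∈ T) ∧
      KConsistent (insert (⟨q, z⟩ : Σ p : P, Fin (c p)) (T.erase ⟨p, t⟩)) ∧
      (insert (⟨q, z⟩ : Σ p : P, Fin (c p)) (T.erase ⟨p, t⟩)).card = T.card := by
  obtain ⟨hjT, hjS⟩ := Finset.mem_sdiff.mp hj
  have hST : S ≠ T := fun h => hjS (h ▸ hjT)
  have hne : (S \ T).Nonempty := by
    rw [Finset.sdiff_nonempty]
    intro hsub
    exact hST (Finset.eq_of_subset_of_card_le hsub (le_of_eq hcard.symm))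
  obtain ⟨⟨q, z0⟩, hk0⟩ := hne
  classical
  set Z : Finset (Fin (c q)) :=
    Finset.univ.filter (fun z => (⟨q, z⟩ : Σ p : P, Fin (c p)) ∈ S \ T) with hZ
  have hZne : Z.Nonempty := ⟨z0, by simp [hZ, Finset.mem_sdiff.mp hk0]⟩
  set z := Z.min' hZne with hzdef
  have hz : (⟨q, z⟩ : Σ p : P, Fin (c p)) ∈ S \ T := by
    exact (Finset.mem_filter.mp (Z.min'_mem hZne)).2
  obtain ⟨hzS, hzT⟩ := Finset.mem_sdiff.mp hz
  have hpred : ∀ z' : Fin (c q), z' < z → (⟨q, z'⟩ : Σ p : P, Fin (c p)) ∈ T := by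
    intro z' hz'
    have hS' : (⟨q, z'⟩ : Σ p : P, Fin (c p)) ∈ S := hS q z z' hz'.le hzS
    by_contra hT'
    have : z ≤ z' := Z.min'_le z'
      (Finset.mem_filter.mpr ⟨Finset.mem_univ _, Finset.mem_sdiff.mpr ⟨hS', hT'⟩⟩)
    exact absurd hz' (not_lt.mpr this)
  refine ⟨q, z, hz, hpred, ?_, ?_⟩
  · intro r s s' hle hmem
    rcases Finset.mem_insert.mp hmem with heq | hmemT
    · obtain ⟨hrq, hsz⟩ := Sigma.mk.inj_iff.mp heq
      subst hrq
      have hsz' : s = z := eq_of_heq hsz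
      subst hsz'
      rcases eq_or_lt_of_le hle with h | h
      · subst h
        exact Finset.mem_insert_self _ _
      · apply Finset.mem_insert_of_mem
        apply Finset.mem_erase.mpr
        refine ⟨?_, hpred s' h⟩
        intro heq2
        obtain ⟨hqp, hst⟩ := Sigma.mk.inj_iff.mp heq2
        subst hqp
        have hs't : s' = t := eq_of_heq hst
        have hzt : z < t := by
          by_contra hnot
          exact hjS (hS r z t (not_lt.mp hnot) hzS)
        exact absurd (hzt.trans (hs't ▸ h)) (lt_irrefl _)
    · obtain ⟨hne1, hT1⟩ := Finset.mem_erase.mp hmemT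
      have hT2 : (⟨r, s'⟩ : Σ p : P, Fin (c p)) ∈ T := hT r s s' hle hT1
      apply Finset.mem_insert_of_mem
      apply Finset.mem_erase.mpr
      refine ⟨?_, hT2⟩
      intro heq2
      obtain ⟨hrp, hst⟩ := Sigma.mk.inj_iff.mp heq2
      subst hrp
      have hs't : s' = t := eq_of_heq hst
      have hts : t < s := lt_of_le_of_ne (hs't ▸ hle) (fun h => hne1 (by rw [h]))
      exact htop s hts hT1
  · have hnotmem : (⟨q, z⟩ : Σ p : P, Fin (c p)) ∉ T.erase ⟨p, t⟩ :=
      fun h => hzT (Finset.mem_of_mem_erase h)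
    rw [Finset.card_insert_of_notMem hnotmem, Finset.card_erase_of_mem hjT]
    have : 0 < T.card := Finset.card_pos.mpr ⟨_, hjT⟩
    omega
end
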